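/- Define the 6×6 matrix u over T = k[x,y,z] with rows (x, 0, 0, y², yz², z⁴), (0, x, 0, −z³, y², yz²), (0, 0, x, −yz, −z³, y²), (y, −z², 0, −x, 0, 0), (0, y, −z², 0, −x, 0), (z, 0, y, 0, 0, −x). Then u·u = (x² + y³ + z⁵)·I₆, i.e., (u,u) is a symmetric matrix factorization of x² + y³ + z⁵. -/
import Mathlib


open MvPolynomial

@[simp] lemma vecCons_idx5 {α : Type*} (a : α) (u : Fin 5 → α) : Matrix.vecCons a u 5 = u 4 := rfl
@[simp] lemma vecCons_idx4 {α : Type*} (a : α) (u : Fin 4 → α) : Matrix.vecCons a u 4 = u 3 := rfl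
@[simp] lemma vecCons_idx3 {α : Type*} (a : α) (u : Fin 3 → α) : Matrix.vecCons a u 3 = u 2 := rfl
@[simp] lemma vecCons_idx2 {α : Type*} (a : α) (u : Fin 2 → α) : Matrix.vecCons a u 2 = u 1 := rfl
@[simp] lemma vecCons_idx1 {α : Type*} (a : α) (u : Fin 1 → α) : Matrix.vecCons a u 1 = u 0 := rfl

/-- Symmetric matrix factorization of x^2+y^3+z^5 representing the rank-three bundle G_3 of weight type (2,3,5). -/
noncomputable def uG3_235 (k : Type*) [Field k] :
    Matrix (Fin 6) (Fin 6) (MvPolynomial (Fin 3) k) :=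
  let x : MvPolynomial (Fin 3) k := X 0
  let y : MvPolynomial (Fin 3) k := X 1
  let z : MvPolynomial (Fin 3) k := X 2
  !![x, 0, 0, y ^ 2, y * z ^ 2, z ^ 4;
     0, x, 0, -z ^ 3, y ^ 2, y * z ^ 2;
     0, 0, x, -(y * z), -z ^ 3, y ^ 2;
     y, -z ^ 2, 0, -x, 0, 0;
     0, y, -z ^ 2, 0, -x, 0;
     z, 0, y, 0, 0, -x]

set_option maxHeartbeats 2000000 in
theorem stmt_7 (k : Type*) [Field k] :
    uG3_235 k * uG3_235 k =
      ((X 0 ^ 2 + X 1 ^ 3 + X 2 ^ 5 : MvPolynomial (Fin 3) k)) •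
        (1 : Matrix (Fin 6) (Fin 6) (MvPolynomial (Fin 3) k)) := by
  show uG3_235 k * uG3_235 k = _
  unfold uG3_235
  refine Matrix.ext fun i j => ?_
  fin_cases i <;> fin_cases j <;>
    simp [Matrix.mul_apply, Fin.sum_univ_six, Matrix.one_apply, Matrix.vecHead, Matrix.vecTail] <;> ring
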